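/- arXiv:2407.06734 — 3 statements merged into one kernel-verified Lean document; each statement's English description precedes it below -/
import Mathlib

section
/- Let g : ℝ → ℂ be of bounded variation, let x ∈ ℝ, let z, y satisfy x < y < z, and let r ≥ δ > 0. Then |(1/(2r)) ∫_{z−r}^{z+r} g − (1/(2r)) ∫_{y−r}^{y+r} g| ≤ (z−y)·Var(g)/(2δ). -/
/-!
Sliding the window `[y - r, y + r]` to `[z - r, z + r]` changes its integral by
`∫_{y+r}^{z+r} (g t - g (t - 2r)) dt`. Every increment of `g` is bounded by `Var(g)` (take the
monotone map with the two values `a ≤ b`), so the change is at most `(z - y) Var(g)`; dividing by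
`2r ≥ 2δ` gives the estimate.
-/

open MeasureTheory

/-- Total variation over ℝ: supremum over monotone maps φ : ℤ → ℝ of
∑ₘ |g(φ(m+1)) − g(φ(m))|, valued in `ℝ≥0∞`. -/
noncomputable def totalVar (g : ℝ → ℂ) : ENNReal :=
  ⨆ φ : {φ : ℤ → ℝ // Monotone φ},
    ∑' m : ℤ, ENNReal.ofReal ‖g (φ.1 (m + 1)) - g (φ.1 m)‖

open intervalIntegral

theorem ofReal_norm_sub_le_totalVar (g : ℝ → ℂ) {a b : ℝ} (hab : a ≤ b) :
    ENNReal.ofReal ‖g b - g a‖ ≤ totalVar g := by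
  let φ : ℤ → ℝ := fun m => if m ≤ 0 then a else b
  have hφ : Monotone φ := fun m n hmn => by
    by_cases hm : m ≤ 0 <;> by_cases hn : n ≤ 0 <;> simp [φ, hm, hn, hab]; omega
  calc ENNReal.ofReal ‖g b - g a‖ = ENNReal.ofReal ‖g (φ (0 + 1)) - g (φ 0)‖ := by simp [φ]
    _ ≤ ∑' m : ℤ, ENNReal.ofReal ‖g (φ (m + 1)) - g (φ m)‖ := ENNReal.le_tsum 0
    _ ≤ totalVar g := le_iSup_of_le (⟨φ, hφ⟩ : {φ : ℤ → ℝ // Monotone φ}) le_rfl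

theorem norm_sub_le_toReal_totalVar {g : ℝ → ℂ} (hBV : totalVar g ≠ ⊤) (a b : ℝ) :
    ‖g b - g a‖ ≤ (totalVar g).toReal := by
  wlog hab : a ≤ b generalizing a b
  · rw [norm_sub_rev]; exact this b a (le_of_not_ge hab)
  exact (ENNReal.ofReal_le_iff_le_toReal hBV).1 (ofReal_norm_sub_le_totalVar g hab)

theorem locallyIntegrable_of_totalVar_ne_top {g : ℝ → ℂ} (hmeas : Measurable g)
    (hBV : totalVar g ≠ ⊤) : LocallyIntegrable g volume :=
  (memLp_top_of_bound hmeas.aestronglyMeasurable (‖g 0‖ + (totalVar g).toReal) <|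
    ae_of_all _ fun t => (norm_le_norm_add_norm_sub' (g t) (g 0)).trans
      (add_le_add le_rfl (norm_sub_le_toReal_totalVar hBV 0 t))).locallyIntegrable le_top

theorem MeasureTheory.LocallyIntegrable.intervalIntegrable {E : Type*} [NormedAddCommGroup E]
    {f : ℝ → E} (hf : LocallyIntegrable f volume) (a b : ℝ) : IntervalIntegrable f volume a b :=
  (hf.integrableOn_isCompact isCompact_uIcc).intervalIntegrable

section MovingAverage

variable {E : Type*} [NormedAddCommGroup E] [NormedSpace ℝ E] {f : ℝ → E}

theorem integral_window_sub_integral_window (hf : LocallyIntegrable f volume) (y z r : ℝ) :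
    (∫ t in (z - r)..(z + r), f t) - ∫ t in (y - r)..(y + r), f t =
      ∫ t in (y + r)..(z + r), (f t - f (t - 2 * r)) := by
  have hshift := (hf.intervalIntegrable (y - r) (z - r)).comp_sub_right (2 * r)
  rw [show y - r + 2 * r = y + r by ring, show z - r + 2 * r = z + r by ring] at hshift
  rw [integral_interval_sub_interval_comm' (hf.intervalIntegrable _ _)
      (hf.intervalIntegrable _ _) (hf.intervalIntegrable _ _),
    integral_sub (hf.intervalIntegrable _ _) hshift, integral_comp_sub_right]
  ring_nf

theorem norm_integral_window_sub_integral_window_le (hf : LocallyIntegrable f volume) {V : ℝ}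
    (hV : ∀ s t, ‖f t - f s‖ ≤ V) {y z : ℝ} (hyz : y ≤ z) (r : ℝ) :
    ‖(∫ t in (z - r)..(z + r), f t) - ∫ t in (y - r)..(y + r), f t‖ ≤ V * (z - y) := by
  rw [integral_window_sub_integral_window hf]
  calc _ ≤ V * |z + r - (y + r)| := norm_integral_le_of_norm_le_const fun t _ => hV _ t
    _ = V * (z - y) := by rw [abs_of_nonneg (by linarith)]; ring

end MovingAverage

theorem stmt1_general (g : ℝ → ℂ) (hmeas : Measurable g) (hBV : totalVar g ≠ ⊤)
    (y z : ℝ) (hyz : y < z) (r δ : ℝ) (hδ : 0 < δ) (hr : δ ≤ r) :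
    ‖(1 / (2 * r)) • (∫ t in (z - r)..(z + r), g t) -
      (1 / (2 * r)) • (∫ t in (y - r)..(y + r), g t)‖ ≤
      (z - y) * (totalVar g).toReal / (2 * δ) := by
  have hr0 : 0 < r := hδ.trans_le hr
  have hwindow := norm_integral_window_sub_integral_window_le
    (locallyIntegrable_of_totalVar_ne_top hmeas hBV) (norm_sub_le_toReal_totalVar hBV) hyz.le r
  have hV : 0 ≤ (totalVar g).toReal * (z - y) := mul_nonneg ENNReal.toReal_nonneg (by linarith)
  rw [← smul_sub, norm_smul, Real.norm_of_nonneg (by positivity)]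
  calc 1 / (2 * r) * ‖_‖ ≤ 1 / (2 * r) * ((totalVar g).toReal * (z - y)) := by gcongr
    _ ≤ 1 / (2 * δ) * ((totalVar g).toReal * (z - y)) := by gcongr
    _ = (z - y) * (totalVar g).toReal / (2 * δ) := by ring

theorem stmt1 (g : ℝ → ℂ) (hmeas : Measurable g) (hBV : totalVar g ≠ ⊤)
    (x y z : ℝ) (hxy : x < y) (hyz : y < z) (r δ : ℝ) (hδ : 0 < δ) (hr : δ ≤ r) :
    ‖(1 / (2 * r)) • (∫ t in (z - r)..(z + r), g t) -
      (1 / (2 * r)) • (∫ t in (y - r)..(y + r), g t)‖ ≤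
      (z - y) * (totalVar g).toReal / (2 * δ) :=
  stmt1_general g hmeas hBV y z hyz r δ hδ hr
end

section
/- Let g : ℝ → ℂ be of bounded variation with |g|(−∞) = A and |g|(+∞) = B. Then lim_{x→+∞} Mg(x) = max{B, (A+B)/2} and lim_{x→−∞} Mg(x) = max{A, (A+B)/2}. -/
/-!
Put `f = ‖g‖`, which is bounded because `g` has bounded variation, and compare it with the step
function `s` equal to `A` on `(-∞, 0]` and to `B` on `(0, ∞)`. For `x > 0` the maximal average of
`s` at `x` is exactly `max B ((A + B) / 2)`: radii `r ≤ x` give `B`, and radii `r > x` give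
`(A + B) / 2 + (B - A) / 2 * (x / r)`, which tends to `(A + B) / 2` as `r → ∞`.
The error `|f - s|` is bounded and tends to `0` at `±∞`, so once `x` is large all its centered
averages at `x` are small: radii `r ≤ x - T` only see the tail `[T, ∞)`, and larger radii dilute
the bounded bump on `[-T, T]` by a factor `T / r`. Since a supremum of averages moves by at most
the average of the difference, the maximal average of `f` at `x` tends to `max B ((A + B) / 2)`;
the limit at `-∞` follows by reflecting `f`.
-/

open MeasureTheory Filter Topology

/-- The centered Hardy–Littlewood maximal operator on ℝ. -/
noncomputable def cHL (g : ℝ → ℂ) (x : ℝ) : ℝ :=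
  ⨆ r : {r : ℝ // 0 < r}, (1 / (2 * r.1)) * ∫ t in (x - r.1)..(x + r.1), ‖g t‖

open Set

lemma norm_sub_le_totalVar (g : ℝ → ℂ) (s t : ℝ) :
    ENNReal.ofReal ‖g t - g s‖ ≤ totalVar g := by
  wlog hst : s ≤ t generalizing s t
  · rw [norm_sub_rev]; exact this t s (le_of_not_ge hst)
  let φ : ℤ → ℝ := fun m => if m ≤ 0 then s else t
  have hφ : Monotone φ := by
    intro m n hmn
    dsimp only [φ]
    split_ifs <;> first | rfl | exact hst | omega
  calc ENNReal.ofReal ‖g t - g s‖ = ENNReal.ofReal ‖g (φ (0 + 1)) - g (φ 0)‖ := by simp [φ]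
    _ ≤ ∑' m : ℤ, ENNReal.ofReal ‖g (φ (m + 1)) - g (φ m)‖ := ENNReal.le_tsum 0
    _ ≤ totalVar g := le_iSup_of_le (⟨φ, hφ⟩ : {φ : ℤ → ℝ // Monotone φ}) le_rfl

lemma norm_le_of_totalVar_ne_top {g : ℝ → ℂ} (hBV : totalVar g ≠ ⊤) (t : ℝ) :
    ‖g t‖ ≤ ‖g 0‖ + (totalVar g).toReal := by
  have h := ENNReal.toReal_mono hBV (norm_sub_le_totalVar g 0 t)
  rw [ENNReal.toReal_ofReal (norm_nonneg _)] at h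
  linarith [norm_le_norm_add_norm_sub' (g t) (g 0)]

lemma intervalIntegrable_of_abs_le {f : ℝ → ℝ} {C : ℝ} (hf : Measurable f)
    (hC : ∀ t, |f t| ≤ C) (a b : ℝ) : IntervalIntegrable f volume a b :=
  intervalIntegrable_const.mono_fun' hf.aestronglyMeasurable
    (Eventually.of_forall fun t => (Real.norm_eq_abs (f t)).symm ▸ hC t)

lemma abs_ciSup_sub_ciSup_le {ι : Sort*} [Nonempty ι] {u v : ι → ℝ} {η : ℝ}
    (hu : BddAbove (range u)) (hv : BddAbove (range v)) (h : ∀ i, |u i - v i| ≤ η) :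
    |(⨆ i, u i) - ⨆ i, v i| ≤ η := by
  refine abs_sub_le_iff.2 ⟨sub_le_iff_le_add.2 (ciSup_le fun i => ?_),
    sub_le_iff_le_add.2 (ciSup_le fun i => ?_)⟩
  · linarith [le_ciSup hv i, (abs_sub_le_iff.1 (h i)).1]
  · linarith [le_ciSup hu i, (abs_sub_le_iff.1 (h i)).2]

noncomputable def centeredAverage (f : ℝ → ℝ) (x r : ℝ) : ℝ :=
  1 / (2 * r) * ∫ t in (x - r)..(x + r), f t

noncomputable def maximalAverage (f : ℝ → ℝ) (x : ℝ) : ℝ :=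
  ⨆ r : {r : ℝ // 0 < r}, centeredAverage f x r

lemma cHL_eq_maximalAverage (g : ℝ → ℂ) : cHL g = maximalAverage fun t => ‖g t‖ := rfl

section Averages

variable {f h : ℝ → ℝ} {x r : ℝ}

lemma centeredAverage_eq_of_integral_eq (hr : 0 < r) {c : ℝ}
    (hint : ∫ t in (x - r)..(x + r), f t = 2 * r * c) : centeredAverage f x r = c := by
  unfold centeredAverage
  rw [hint]
  field_simp

lemma centeredAverage_le_of_forall_le (hr : 0 < r)
    (hf : IntervalIntegrable f volume (x - r) (x + r)) {K : ℝ}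
    (hK : ∀ t ∈ Icc (x - r) (x + r), f t ≤ K) : centeredAverage f x r ≤ K := by
  have h := intervalIntegral.integral_mono_on (by linarith) hf intervalIntegrable_const hK
  rw [intervalIntegral.integral_const, smul_eq_mul] at h
  unfold centeredAverage
  rw [div_mul_eq_mul_div, one_mul, div_le_iff₀ (by positivity)]
  linarith

lemma abs_centeredAverage_sub_le (hr : 0 < r)
    (hf : IntervalIntegrable f volume (x - r) (x + r))
    (hh : IntervalIntegrable h volume (x - r) (x + r)) :
    |centeredAverage f x r - centeredAverage h x r|
      ≤ centeredAverage (fun t => |f t - h t|) x r := by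
  unfold centeredAverage
  rw [← mul_sub, ← intervalIntegral.integral_sub hf hh, abs_mul,
    abs_of_pos (by positivity : (0 : ℝ) < 1 / (2 * r))]
  gcongr
  exact intervalIntegral.abs_integral_le_integral_abs (by linarith)

variable {C C' : ℝ}

lemma bddAbove_range_centeredAverage (hf : Measurable f) (hC : ∀ t, |f t| ≤ C) (x : ℝ) :
    BddAbove (range fun r : {r : ℝ // 0 < r} => centeredAverage f x r) :=
  ⟨C, by
    rintro _ ⟨⟨r, hr⟩, rfl⟩
    exact centeredAverage_le_of_forall_le hr (intervalIntegrable_of_abs_le hf hC _ _)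
      fun t _ => (le_abs_self _).trans (hC t)⟩

lemma abs_maximalAverage_sub_le (hf : Measurable f) (hh : Measurable h)
    (hfC : ∀ t, |f t| ≤ C) (hhC : ∀ t, |h t| ≤ C') {η : ℝ}
    (hη : ∀ r, 0 < r → centeredAverage (fun t => |f t - h t|) x r ≤ η) :
    |maximalAverage f x - maximalAverage h x| ≤ η :=
  have : Nonempty {r : ℝ // 0 < r} := ⟨⟨1, one_pos⟩⟩
  abs_ciSup_sub_ciSup_le (bddAbove_range_centeredAverage hf hfC x)
    (bddAbove_range_centeredAverage hh hhC x) fun ⟨r, hr⟩ =>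
      (abs_centeredAverage_sub_le hr (intervalIntegrable_of_abs_le hf hfC _ _)
        (intervalIntegrable_of_abs_le hh hhC _ _)).trans (hη r hr)

end Averages

noncomputable def stepFun (A B : ℝ) (t : ℝ) : ℝ := if t ≤ 0 then A else B

section StepFun

variable {A B : ℝ}

lemma measurable_stepFun : Measurable (stepFun A B) :=
  Measurable.ite measurableSet_Iic measurable_const measurable_const

lemma abs_stepFun_le (t : ℝ) : |stepFun A B t| ≤ max |A| |B| := by
  unfold stepFun
  split_ifs
  exacts [le_max_left _ _, le_max_right _ _]

lemma integral_stepFun_of_nonneg {a b : ℝ} (ha : 0 ≤ a) (hb : 0 ≤ b) :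
    ∫ t in a..b, stepFun A B t = (b - a) * B := by
  rw [intervalIntegral.integral_congr_ae (g := fun _ => B), intervalIntegral.integral_const,
    smul_eq_mul]
  exact Eventually.of_forall fun t ht => if_neg (not_le.2 ((le_min ha hb).trans_lt ht.1))

lemma integral_stepFun_of_nonpos {a b : ℝ} (ha : a ≤ 0) (hb : b ≤ 0) :
    ∫ t in a..b, stepFun A B t = (b - a) * A := by
  rw [intervalIntegral.integral_congr_ae (g := fun _ => A), intervalIntegral.integral_const,
    smul_eq_mul]
  exact Eventually.of_forall fun t ht => if_pos (ht.2.trans (max_le ha hb))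

variable {x r : ℝ}

lemma centeredAverage_stepFun_of_le (hr : 0 < r) (hrx : r ≤ x) :
    centeredAverage (stepFun A B) x r = B :=
  centeredAverage_eq_of_integral_eq hr <| by
    rw [integral_stepFun_of_nonneg (by linarith) (by linarith)]
    ring

lemma centeredAverage_stepFun_of_abs_le (hr : 0 < r) (hxr : |x| ≤ r) :
    centeredAverage (stepFun A B) x r = (A + B) / 2 + (B - A) / 2 * (x / r) := by
  obtain ⟨h₁, h₂⟩ := abs_le.1 hxr
  have hi := intervalIntegrable_of_abs_le measurable_stepFun (abs_stepFun_le (A := A) (B := B))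
  refine centeredAverage_eq_of_integral_eq hr ?_
  rw [← intervalIntegral.integral_add_adjacent_intervals (hi _ 0) (hi 0 _),
    integral_stepFun_of_nonpos (by linarith) le_rfl,
    integral_stepFun_of_nonneg le_rfl (by linarith)]
  field_simp
  ring

lemma maximalAverage_stepFun (hx : 0 < x) :
    maximalAverage (stepFun A B) x = max B ((A + B) / 2) := by
  have hle : ∀ r : {r : ℝ // 0 < r},
      centeredAverage (stepFun A B) x r ≤ max B ((A + B) / 2) := by
    rintro ⟨r, hr⟩
    rcases le_or_gt r x with hrx | hxr
    · exact (centeredAverage_stepFun_of_le hr hrx).trans_le (le_max_left _ _)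
    rw [centeredAverage_stepFun_of_abs_le hr ((abs_of_pos hx).trans_le hxr.le)]
    have hx₀ : 0 ≤ x / r := by positivity
    have hx₁ : x / r ≤ 1 := (div_le_one hr).2 hxr.le
    rcases le_total A B with hAB | hAB
    · exact le_max_of_le_left (by nlinarith)
    · exact le_max_of_le_right (by nlinarith)
  have hbdd : BddAbove (range fun r : {r : ℝ // 0 < r} => centeredAverage (stepFun A B) x r) :=
    ⟨_, forall_mem_range.2 hle⟩
  have : Nonempty {r : ℝ // 0 < r} := ⟨⟨1, one_pos⟩⟩
  refine le_antisymm (ciSup_le hle) (max_le ?_ ?_)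
  · exact (centeredAverage_stepFun_of_le hx le_rfl).symm.trans_le (le_ciSup hbdd ⟨x, hx⟩)
  have hlim : Tendsto (fun r => (A + B) / 2 + (B - A) / 2 * (x / r)) atTop (𝓝 ((A + B) / 2)) := by
    simpa using tendsto_const_nhds.add
      ((tendsto_const_nhds.div_atTop tendsto_id).const_mul ((B - A) / 2))
  refine le_of_tendsto hlim ?_
  filter_upwards [eventually_gt_atTop x] with r hxr
  have hr : 0 < r := hx.trans hxr
  rw [← centeredAverage_stepFun_of_abs_le hr ((abs_of_pos hx).trans_le hxr.le)]
  exact le_ciSup hbdd ⟨r, hr⟩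

end StepFun

section Vanishing

variable {e : ℝ → ℝ} {K ε T : ℝ}

lemma integral_le_of_le_off_Icc {a b : ℝ} (he : IntervalIntegrable e volume a b) (hab : a ≤ b)
    (hε : 0 ≤ ε) (hK : 0 ≤ K) (hT : 0 ≤ T) (heK : ∀ t, e t ≤ K) (heε : ∀ t, T ≤ |t| → e t ≤ ε) :
    ∫ t in a..b, e t ≤ ε * (b - a) + 2 * T * K := by
  have hχ : ∫ t in a..b, (Icc (-T) T).indicator (fun _ => K) t ≤ 2 * T * K := by
    rw [intervalIntegral.integral_of_le hab, setIntegral_indicator measurableSet_Icc,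
      setIntegral_const, smul_eq_mul]
    calc volume.real (Ioc a b ∩ Icc (-T) T) * K ≤ volume.real (Icc (-T) T) * K := by
          gcongr
          exacts [measure_Icc_lt_top.ne, inter_subset_right]
      _ = 2 * T * K := by rw [Real.volume_real_Icc_of_le (by linarith)]; ring
  have hle : ∀ t ∈ Icc a b, e t ≤ ε + (Icc (-T) T).indicator (fun _ => K) t := by
    intro t _
    by_cases ht : t ∈ Icc (-T) T
    · rw [indicator_of_mem ht]
      linarith [heK t]
    · rw [indicator_of_notMem ht, add_zero]
      exact heε t (not_le.1 fun h => ht (abs_le.1 h)).le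
  have hχi : IntervalIntegrable ((Icc (-T) T).indicator fun _ => K) volume a b :=
    intervalIntegrable_of_abs_le (C := K) (measurable_const.indicator measurableSet_Icc)
      (fun t => by by_cases ht : t ∈ Icc (-T) T <;> simp [ht, abs_of_nonneg hK, hK]) a b
  calc ∫ t in a..b, e t ≤ ∫ t in a..b, (ε + (Icc (-T) T).indicator (fun _ => K) t) :=
        intervalIntegral.integral_mono_on hab he (intervalIntegrable_const.add hχi) hle
    _ ≤ ε * (b - a) + 2 * T * K := by
        rw [intervalIntegral.integral_add intervalIntegrable_const hχi,
          intervalIntegral.integral_const, smul_eq_mul]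
        linarith

lemma exists_forall_le_of_tendsto_atBot_atTop (hbot : Tendsto e atBot (𝓝 0))
    (htop : Tendsto e atTop (𝓝 0)) (hε : 0 < ε) : ∃ T, 0 ≤ T ∧ ∀ t, T ≤ |t| → e t ≤ ε := by
  obtain ⟨T₁, h₁⟩ := eventually_atTop.1 (htop.eventually (eventually_le_nhds hε))
  obtain ⟨T₂, h₂⟩ := eventually_atBot.1 (hbot.eventually (eventually_le_nhds hε))
  refine ⟨max 0 (max T₁ (-T₂)), le_max_left _ _, fun t ht => ?_⟩
  rcases le_abs'.1 ht with h | h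
  · exact h₂ t (by linarith [le_max_right T₁ (-T₂), le_max_right 0 (max T₁ (-T₂))])
  · exact h₁ t (by linarith [le_max_left T₁ (-T₂), le_max_right 0 (max T₁ (-T₂))])

lemma eventually_forall_centeredAverage_le (he : Measurable e) (hK : ∀ t, |e t| ≤ K)
    (hbot : Tendsto e atBot (𝓝 0)) (htop : Tendsto e atTop (𝓝 0)) (hε : 0 < ε) :
    ∀ᶠ x in atTop, ∀ r, 0 < r → centeredAverage e x r ≤ ε := by
  have hε₂ : 0 < ε / 2 := half_pos hε
  obtain ⟨T, hT, heT⟩ := exists_forall_le_of_tendsto_atBot_atTop hbot htop hε₂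
  have hK₀ : 0 ≤ K := (abs_nonneg _).trans (hK 0)
  have hi := intervalIntegrable_of_abs_le he hK
  filter_upwards [eventually_ge_atTop (T + T * K / (ε / 2))] with x hx r hr
  rcases le_total r (x - T) with hrx | hrx
  · refine (centeredAverage_le_of_forall_le hr (hi _ _) fun t ht => heT t ?_).trans
      (half_le_self hε.le)
    rw [abs_of_nonneg (by linarith [ht.1])]
    linarith [ht.1]
  · have hint := integral_le_of_le_off_Icc (hi (x - r) (x + r)) (by linarith) hε₂.le hK₀ hT
      (fun t => (le_abs_self _).trans (hK t)) heT
    have hTK : T * K ≤ ε / 2 * r := by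
      rw [← div_le_iff₀' hε₂]
      linarith
    unfold centeredAverage
    rw [div_mul_eq_mul_div, one_mul, div_le_iff₀ (by positivity)]
    linarith

end Vanishing

section Limits

variable {f : ℝ → ℝ} {A B C : ℝ}

theorem tendsto_maximalAverage_atTop (hf : Measurable f) (hC : ∀ t, |f t| ≤ C)
    (hA : Tendsto f atBot (𝓝 A)) (hB : Tendsto f atTop (𝓝 B)) :
    Tendsto (maximalAverage f) atTop (𝓝 (max B ((A + B) / 2))) := by
  have he : Measurable fun t => |f t - stepFun A B t| := (hf.sub measurable_stepFun).abs
  have heK : ∀ t, |(|f t - stepFun A B t|)| ≤ C + max |A| |B| := fun t => by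
    rw [abs_abs]
    exact (abs_sub _ _).trans (add_le_add (hC t) (abs_stepFun_le t))
  have hbot : Tendsto (fun t => |f t - stepFun A B t|) atBot (𝓝 0) := by
    refine ((hA.sub_const A).abs.congr' ?_).trans_eq (by simp)
    filter_upwards [eventually_le_atBot 0] with t ht
    rw [stepFun, if_pos ht]
  have htop : Tendsto (fun t => |f t - stepFun A B t|) atTop (𝓝 0) := by
    refine ((hB.sub_const B).abs.congr' ?_).trans_eq (by simp)
    filter_upwards [eventually_gt_atTop 0] with t ht
    rw [stepFun, if_neg (not_le.2 ht)]
  refine Metric.tendsto_nhds.2 fun ε hε => ?_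
  filter_upwards [eventually_forall_centeredAverage_le he heK hbot htop (half_pos hε),
    eventually_gt_atTop 0] with x hx hx₀
  rw [Real.dist_eq, ← maximalAverage_stepFun hx₀]
  exact (abs_maximalAverage_sub_le hf measurable_stepFun hC abs_stepFun_le hx).trans_lt
    (half_lt_self hε)

lemma maximalAverage_comp_neg (f : ℝ → ℝ) (x : ℝ) :
    maximalAverage (fun t => f (-t)) x = maximalAverage f (-x) := by
  unfold maximalAverage centeredAverage
  congr! 3 with r
  rw [intervalIntegral.integral_comp_neg (fun t => f t)]
  congr 1 <;> ring

theorem tendsto_maximalAverage_atBot (hf : Measurable f) (hC : ∀ t, |f t| ≤ C)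
    (hA : Tendsto f atBot (𝓝 A)) (hB : Tendsto f atTop (𝓝 B)) :
    Tendsto (maximalAverage f) atBot (𝓝 (max A ((A + B) / 2))) := by
  have h := tendsto_maximalAverage_atTop (hf.comp measurable_neg) (fun t => hC (-t))
    (hB.comp tendsto_neg_atBot_atTop) (hA.comp tendsto_neg_atTop_atBot)
  rw [add_comm B A] at h
  simpa only [Function.comp_def, maximalAverage_comp_neg, neg_neg] using
    h.comp tendsto_neg_atBot_atTop

end Limits

theorem stmt3 (g : ℝ → ℂ) (hmeas : Measurable g) (hBV : totalVar g ≠ ⊤)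
    (A B : ℝ)
    (hA : Tendsto (fun x => ‖g x‖) atBot (𝓝 A))
    (hB : Tendsto (fun x => ‖g x‖) atTop (𝓝 B)) :
    Tendsto (cHL g) atTop (𝓝 (max B ((A + B) / 2))) ∧
      Tendsto (cHL g) atBot (𝓝 (max A ((A + B) / 2))) := by
  have hC : ∀ t, |‖g t‖| ≤ ‖g 0‖ + (totalVar g).toReal := fun t =>
    (abs_norm _).trans_le (norm_le_of_totalVar_ne_top hBV t)
  rw [cHL_eq_maximalAverage]
  exact ⟨tendsto_maximalAverage_atTop hmeas.norm hC hA hB,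
    tendsto_maximalAverage_atBot hmeas.norm hC hA hB⟩
end

section
/- Let G : ℤ → ℂ be of bounded variation and let g : ℝ → ℂ be its piecewise-constant extension g(x) = G(n) for x ∈ [n−1/2, n+1/2). Then for every n ∈ ℤ, the continuous centered maximal function of g at n equals the discrete centered maximal function of G at n: Mg(n) = MG(n). -/
/-! For `m + 1/2 ≤ r ≤ m + 3/2` the integral of `|g|` over `[n - r, n + r]` is affine in `r`,
so the centered average is a ratio of affine functions of `r`, monotone on that range, and is
bounded by its value at an endpoint, which is a discrete average of `|G|`. Conversely the
discrete average of radius `m` is the continuous one of radius `m + 1/2`. The two families of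
averages thus dominate each other and have the same supremum, also when they are unbounded
and both suprema take the junk value `0`. -/

open MeasureTheory

/-- Total variation over ℤ: sup over monotone maps φ : ℤ → ℤ. -/
noncomputable def varZ (G : ℤ → ℂ) : ENNReal :=
  ⨆ φ : {φ : ℤ → ℤ // Monotone φ},
    ∑' m : ℤ, ENNReal.ofReal ‖G (φ.1 (m + 1)) - G (φ.1 m)‖

/-- The discrete centered Hardy–Littlewood maximal operator. -/
noncomputable def dHL (G : ℤ → ℂ) (n : ℤ) : ℝ :=
  ⨆ m : ℕ, (1 / (2 * (m : ℝ) + 1)) * ∑ y ∈ Finset.Icc (n - (m : ℤ)) (n + (m : ℤ)), ‖G y‖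

open Set intervalIntegral

/-- The left side is a ratio of affine functions of `θ`, hence monotone on `[0, 1]`, in the
direction given by the sign of `d * s - 2 * S`. -/
lemma add_mul_div_add_two_mul_le_max {S d s θ : ℝ} (hs : 0 < s) (hθ₀ : 0 ≤ θ) (hθ₁ : θ ≤ 1) :
    (S + θ * d) / (s + 2 * θ) ≤ max (S / s) ((S + d) / (s + 2)) := by
  rcases le_or_gt (d * s) (2 * S) with h | h
  · refine le_max_of_le_left ?_
    rw [div_le_div_iff₀ (by linarith) hs]
    nlinarith
  · refine le_max_of_le_right ?_
    rw [div_le_div_iff₀ (by linarith) (by linarith)]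
    nlinarith

lemma sum_Icc_sub_one_add_one {a b : ℤ} (hab : a ≤ b + 1) (f : ℤ → ℝ) :
    ∑ y ∈ Finset.Icc (a - 1) (b + 1), f y
      = ∑ y ∈ Finset.Icc a b, f y + (f (a - 1) + f (b + 1)) := by
  have hIcc : Finset.Icc (a - 1) (b + 1) = insert (a - 1) (insert (b + 1) (Finset.Icc a b)) := by
    ext; simp only [Finset.mem_insert, Finset.mem_Icc]; omega
  rw [hIcc, Finset.sum_insert (by simp only [Finset.mem_insert, Finset.mem_Icc]; omega),
    Finset.sum_insert (by simp)]
  ring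

noncomputable def centeredAvg (h : ℝ → ℝ) (x r : ℝ) : ℝ :=
  (1 / (2 * r)) * ∫ t in (x - r)..(x + r), h t

noncomputable def discreteCenteredAvg (F : ℤ → ℝ) (n : ℤ) (m : ℕ) : ℝ :=
  (1 / (2 * (m : ℝ) + 1)) * ∑ y ∈ Finset.Icc (n - m) (n + m), F y

lemma discreteCenteredAvg_succ (F : ℤ → ℝ) (n : ℤ) (m : ℕ) :
    discreteCenteredAvg F n (m + 1)
      = (∑ y ∈ Finset.Icc (n - m) (n + m), F y + (F (n - m - 1) + F (n + m + 1)))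
        / (2 * m + 1 + 2) := by
  have hlo : n - ((m + 1 : ℕ) : ℤ) = n - m - 1 := by push_cast; ring
  have hhi : n + ((m + 1 : ℕ) : ℤ) = n + m + 1 := by push_cast; ring
  rw [discreteCenteredAvg, hlo, hhi, sum_Icc_sub_one_add_one (by omega), one_div_mul_eq_div]
  push_cast
  ring

section StepFunction

variable {h : ℝ → ℝ} {F : ℤ → ℝ}
  (hh : ∀ k : ℤ, ∀ t ∈ Ioo ((k : ℝ) - 1/2) ((k : ℝ) + 1/2), h t = F k)
include hh

lemma intervalIntegrable_and_integral_of_subset_cell (k : ℤ) {u v : ℝ}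
    (hku : (k : ℝ) - 1/2 ≤ u) (huv : u ≤ v) (hvk : v ≤ (k : ℝ) + 1/2) :
    IntervalIntegrable h volume u v ∧ ∫ t in u..v, h t = (v - u) * F k := by
  have hEq : EqOn h (fun _ => F k) (Ioo u v) := fun t ht =>
    hh k t ⟨hku.trans_lt ht.1, ht.2.trans_le hvk⟩
  constructor
  · rw [intervalIntegrable_iff_integrableOn_Ioo_of_le huv]
    exact (integrableOn_const (by simp)).congr_fun hEq.symm measurableSet_Ioo
  · rw [integral_of_le huv, integral_Ioc_eq_integral_Ioo,
      setIntegral_congr_fun measurableSet_Ioo hEq]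
    simp [huv]

lemma intervalIntegrable_and_integral_of_cells {a b : ℤ} (hab : a ≤ b) :
    IntervalIntegrable h volume ((a : ℝ) - 1/2) ((b : ℝ) + 1/2) ∧
      ∫ t in ((a : ℝ) - 1/2)..((b : ℝ) + 1/2), h t = ∑ k ∈ Finset.Icc a b, F k := by
  induction b, hab using Int.leInduction with
  | base =>
    obtain ⟨hint, hcell⟩ := intervalIntegrable_and_integral_of_subset_cell hh a
      (u := (a : ℝ) - 1/2) (v := (a : ℝ) + 1/2) le_rfl (by linarith) le_rfl
    refine ⟨hint, ?_⟩
    rw [hcell, Finset.Icc_self, Finset.sum_singleton]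
    ring
  | succ b hab ih =>
    obtain ⟨hint, hcell⟩ := intervalIntegrable_and_integral_of_subset_cell hh (b + 1)
      (u := (b : ℝ) + 1/2) (v := (b : ℝ) + 1 + 1/2) (by push_cast; linarith) (by linarith)
      (by push_cast; linarith)
    refine ⟨by push_cast; exact ih.1.trans hint, ?_⟩
    rw [← Finset.insert_Icc_right_eq_Icc_add_one (by omega),
      Finset.sum_insert (by simp), Int.cast_add, Int.cast_one,
      ← integral_add_adjacent_intervals ih.1 hint, ih.2, hcell]
    ring

lemma integral_centered_of_mem_Icc (n : ℤ) (m : ℕ) {θ : ℝ} (hθ₀ : 0 ≤ θ) (hθ₁ : θ ≤ 1) :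
    ∫ t in ((n : ℝ) - (m + 1/2 + θ))..((n : ℝ) + (m + 1/2 + θ)), h t
      = ∑ k ∈ Finset.Icc (n - m) (n + m), F k + θ * (F (n - m - 1) + F (n + m + 1)) := by
  obtain ⟨hintL, hL⟩ := intervalIntegrable_and_integral_of_subset_cell hh (n - m - 1)
      (u := (n : ℝ) - (m + 1/2 + θ)) (v := (n : ℝ) - (m + 1/2)) (by push_cast; linarith)
      (by linarith) (by push_cast; linarith)
  obtain ⟨hintR, hR⟩ := intervalIntegrable_and_integral_of_subset_cell hh (n + m + 1)
      (u := (n : ℝ) + (m + 1/2)) (v := (n : ℝ) + (m + 1/2 + θ)) (by push_cast; linarith)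
      (by linarith) (by push_cast; linarith)
  obtain ⟨hintM, hM⟩ := intervalIntegrable_and_integral_of_cells hh (a := n - m) (b := n + m)
    (by omega)
  have hpq : ((n - m : ℤ) : ℝ) - 1/2 = n - (m + 1/2) ∧ ((n + m : ℤ) : ℝ) + 1/2 = n + (m + 1/2) :=
    by push_cast; constructor <;> ring
  rw [hpq.1, hpq.2] at hintM hM
  rw [← integral_add_adjacent_intervals hintL (hintM.trans hintR),
    ← integral_add_adjacent_intervals hintM hintR, hL, hR, hM]
  ring

lemma centeredAvg_half_integer (n : ℤ) (m : ℕ) :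
    centeredAvg h n (m + 1/2) = discreteCenteredAvg F n m := by
  have := integral_centered_of_mem_Icc hh n m le_rfl zero_le_one
  rw [add_zero, zero_mul, add_zero] at this
  rw [centeredAvg, discreteCenteredAvg, this]
  congr 2
  ring

lemma exists_centeredAvg_le_discreteCenteredAvg (n : ℤ) {r : ℝ} (hr : 0 < r) :
    ∃ m : ℕ, centeredAvg h n r ≤ discreteCenteredAvg F n m := by
  rcases le_or_gt r (1/2) with hr_le | hr_gt
  · refine ⟨0, le_of_eq ?_⟩
    obtain ⟨-, hcell⟩ := intervalIntegrable_and_integral_of_subset_cell hh n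
      (u := n - r) (v := n + r) (by linarith) (by linarith) (by linarith)
    rw [centeredAvg, discreteCenteredAvg, hcell]
    simp only [CharP.cast_eq_zero, mul_zero, zero_add, sub_zero, add_zero, Finset.Icc_self,
      Finset.sum_singleton]
    field_simp
    ring
  · set m := ⌊r - 1/2⌋₊
    set θ := r - (m + 1/2) with hθ
    have hθ₀ : 0 ≤ θ := by have := Nat.floor_le (a := r - 1/2) (by linarith); linarith
    have hθ₁ : θ ≤ 1 := by have := Nat.lt_floor_add_one (r - 1/2); linarith
    have hrθ : r = m + 1/2 + θ := by ring
    have hineq := add_mul_div_add_two_mul_le_max (S := ∑ y ∈ Finset.Icc (n - m) (n + m), F y)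
      (d := F (n - m - 1) + F (n + m + 1)) (s := 2 * m + 1) (by positivity) hθ₀ hθ₁
    rw [← discreteCenteredAvg_succ] at hineq
    have hval : centeredAvg h n r = (∑ y ∈ Finset.Icc (n - m) (n + m), F y
        + θ * (F (n - m - 1) + F (n + m + 1))) / (2 * m + 1 + 2 * θ) := by
      rw [centeredAvg, hrθ, integral_centered_of_mem_Icc hh n m hθ₀ hθ₁, one_div_mul_eq_div]
      congr 1
      ring
    rw [hval]
    rcases le_max_iff.mp hineq with h0 | h1
    · exact ⟨m, by rwa [discreteCenteredAvg, one_div_mul_eq_div]⟩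
    · exact ⟨m + 1, h1⟩

end StepFunction

theorem stmt6_general (G : ℤ → ℂ) (g : ℝ → ℂ)
    (hg : ∀ n : ℤ, ∀ x ∈ Set.Ico ((n : ℝ) - 1/2) ((n : ℝ) + 1/2), g x = G n) :
    ∀ n : ℤ, cHL g (n : ℝ) = dHL G n := by
  intro n
  have hcell : ∀ k : ℤ, ∀ t ∈ Ioo ((k : ℝ) - 1/2) ((k : ℝ) + 1/2), ‖g t‖ = ‖G k‖ :=
    fun k t ht => by rw [hg k t (Ioo_subset_Ico_self ht)]
  show ⨆ r : {r : ℝ // 0 < r}, centeredAvg (‖g ·‖) n r = ⨆ m, discreteCenteredAvg (‖G ·‖) n m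
  apply csSup_eq_csSup_of_forall_exists_le
  · rintro _ ⟨⟨r, hr⟩, rfl⟩
    obtain ⟨m, hm⟩ := exists_centeredAvg_le_discreteCenteredAvg hcell n hr
    exact ⟨_, ⟨m, rfl⟩, hm⟩
  · rintro _ ⟨m, rfl⟩
    exact ⟨_, ⟨⟨m + 1/2, by positivity⟩, rfl⟩, (centeredAvg_half_integer hcell n m).ge⟩

theorem stmt6 (G : ℤ → ℂ) (hBV : varZ G ≠ ⊤) (g : ℝ → ℂ)
    (hg : ∀ n : ℤ, ∀ x ∈ Set.Ico ((n : ℝ) - 1/2) ((n : ℝ) + 1/2), g x = G n) :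
    ∀ n : ℤ, cHL g (n : ℝ) = dHL G n :=
  stmt6_general G g hg
end
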